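/- arXiv:1806.05051 — 4 statements merged into one kernel-verified Lean document; each statement's English description precedes it below -/
import Mathlib

section
/- Let Ω ⊆ ℝ³ be open, f ∈ L¹(Ω), γ > 0. Define F(u) = ∫_Ω f·u dx + γ·|Du|(Ω) for u ∈ BV(Ω; [0,1]). If u is a minimizer of F over L^∞(Ω;[0,1]) ∩ BV, then by the coarea formula F(u) = ∫_0^1 F(𝟙_{{u > t}}) dt, and consequently there exists t ∈ [0,1) such that the characteristic function 𝟙_{{u > t}} is also a minimizer of F, taking only the values 0 and 1. -/
/-!
Since `u` need not be measurable, the one substantial point is that the layer term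
`t ↦ ∫_Ω f 𝟙_{u > t}` is integrable on `(0,1)`. For an antitone family of sets `S t` the lower
integral of `𝟙_{S t} f⁺` and its upper integral (the infimum over measurable a.e. majorants) are
both antitone in `t`, hence measurable, and with finite lower integral `𝟙_{S t} f⁺` is
a.e.-measurable exactly where the upper integral does not exceed the lower one. The Bochner
integral of `𝟙_{S t} f` is `∫ 𝟙_{S t} f⁺ - ∫ 𝟙_{S t} f⁻` on that measurable set of parameters
and `0` off it, so it is measurable in `t`, and it is bounded by `‖f‖₁`.

With the layer term integrable, the coarea and layer-cake formulas make `F u` the mean of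
`t ↦ F 𝟙_{u > t}` over `(0,1)`, and the first moment method yields a level at which this
function is at most its mean, hence at most `F u`.
-/

open MeasureTheory Set
open scoped ENNReal

namespace MeasureTheory

variable {α : Type*} [MeasurableSpace α] {μ : Measure α} {f g : α → ℝ≥0∞}

noncomputable def upperLIntegral (μ : Measure α) (f : α → ℝ≥0∞) : ℝ≥0∞ :=
  sInf ((fun g => ∫⁻ x, g x ∂μ) '' {g | Measurable g ∧ f ≤ᵐ[μ] g})

theorem upperLIntegral_le_lintegral (hg : Measurable g) (hfg : f ≤ᵐ[μ] g) :
    upperLIntegral μ f ≤ ∫⁻ x, g x ∂μ :=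
  sInf_le ⟨g, ⟨hg, hfg⟩, rfl⟩

theorem upperLIntegral_mono : Monotone (upperLIntegral μ) := by
  intro f f' hff'
  refine le_sInf ?_
  rintro _ ⟨g, ⟨hg, hf'g⟩, rfl⟩
  exact upperLIntegral_le_lintegral hg (hf'g.mono fun x hx => (hff' x).trans hx)

theorem exists_measurable_ae_ge_lintegral_eq_upperLIntegral (μ : Measure α) (f : α → ℝ≥0∞) :
    ∃ g, Measurable g ∧ f ≤ᵐ[μ] g ∧ ∫⁻ x, g x ∂μ = upperLIntegral μ f := by
  obtain ⟨I, -, hI, hImem⟩ := exists_seq_tendsto_sInf (α := ℝ≥0∞)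
    (S := (fun g => ∫⁻ x, g x ∂μ) '' {g | Measurable g ∧ f ≤ᵐ[μ] g})
    ⟨_, fun _ => ∞, ⟨measurable_const, ae_of_all _ fun _ => le_top⟩, rfl⟩ (OrderBot.bddBelow _)
  choose g hg hgI using hImem
  have hGm : Measurable fun x => ⨅ n, g n x := .iInf fun n => (hg n).1
  have hfG : f ≤ᵐ[μ] fun x => ⨅ n, g n x :=
    (ae_all_iff.2 fun n => (hg n).2).mono fun x hx => le_iInf hx
  refine ⟨_, hGm, hfG, le_antisymm (ge_of_tendsto' hI fun n => ?_)
    (upperLIntegral_le_lintegral hGm hfG)⟩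
  rw [← hgI n]
  exact lintegral_mono fun x => iInf_le _ n

theorem aemeasurable_iff_upperLIntegral_le (hf : ∫⁻ x, f x ∂μ ≠ ∞) :
    AEMeasurable f μ ↔ upperLIntegral μ f ≤ ∫⁻ x, f x ∂μ := by
  refine ⟨fun hfm => ?_, fun hle => ?_⟩
  · rw [lintegral_congr_ae hfm.ae_eq_mk]
    exact upperLIntegral_le_lintegral hfm.measurable_mk hfm.ae_eq_mk.le
  obtain ⟨g₀, hg₀, hg₀f, hg₀eq⟩ := exists_measurable_le_lintegral_eq μ f
  obtain ⟨G, hG, hfG, hGeq⟩ := exists_measurable_ae_ge_lintegral_eq_upperLIntegral μ f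
  have hg₀G : g₀ =ᵐ[μ] G := ae_eq_of_ae_le_of_lintegral_le
    (hfG.mono fun x hx => (hg₀f x).trans hx) (hg₀eq ▸ hf) hG.aemeasurable
    (by rw [hGeq, ← hg₀eq]; exact hle)
  refine ⟨g₀, hg₀, ?_⟩
  filter_upwards [hg₀G, hfG] with x hx hfx
  exact le_antisymm (hfx.trans_eq hx.symm) (hg₀f x)

variable {β : Type*} [LinearOrder β] [TopologicalSpace β] [OrderClosedTopology β]
  [MeasurableSpace β] [BorelSpace β]

theorem measurableSet_setOf_aemeasurable_of_antitone {f : β → α → ℝ≥0∞} (hf : Antitone f)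
    (hfin : ∀ b, ∫⁻ x, f b x ∂μ ≠ ∞) : MeasurableSet {b | AEMeasurable (f b) μ} := by
  have hlower : Measurable fun b => ∫⁻ x, f b x ∂μ :=
    Antitone.measurable fun a b hab => lintegral_mono (hf hab)
  have hupper : Measurable fun b => upperLIntegral μ (f b) :=
    Antitone.measurable fun a b hab => upperLIntegral_mono (hf hab)
  simp_rw [aemeasurable_iff_upperLIntegral_le (hfin _)]
  exact measurableSet_le hupper hlower

theorem aestronglyMeasurable_iff_aemeasurable_ofReal {g : α → ℝ} :
    AEStronglyMeasurable g μ ↔ AEMeasurable (fun x => ENNReal.ofReal (g x)) μ ∧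
      AEMeasurable (fun x => ENNReal.ofReal (-g x)) μ := by
  refine ⟨fun hg => ⟨hg.aemeasurable.ennreal_ofReal, hg.aemeasurable.neg.ennreal_ofReal⟩,
    fun ⟨hpos, hneg⟩ => ?_⟩
  have hg : g = fun x => (ENNReal.ofReal (g x)).toReal - (ENNReal.ofReal (-g x)).toReal := by
    simp only [ENNReal.toReal_ofReal', max_zero_sub_max_neg_zero_eq_self]
  rw [hg]
  exact (hpos.ennreal_toReal.sub hneg.ennreal_toReal).aestronglyMeasurable

theorem measurable_integral_indicator_of_antitone {S : β → Set α} (hS : Antitone S) {g : α → ℝ}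
    (hg : Integrable g μ) : Measurable fun b => ∫ x, (S b).indicator g x ∂μ := by
  set P : β → α → ℝ≥0∞ := fun b => (S b).indicator fun x => ENNReal.ofReal (g x)
  set N : β → α → ℝ≥0∞ := fun b => (S b).indicator fun x => ENNReal.ofReal (-g x)
  have hP : Antitone P := fun a b hab => indicator_le_indicator_of_subset (hS hab) fun _ => zero_le
  have hN : Antitone N := fun a b hab => indicator_le_indicator_of_subset (hS hab) fun _ => zero_le
  have hPfin : ∀ b, ∫⁻ x, P b x ∂μ ≠ ∞ := fun b =>
    ne_top_of_le_ne_top hg.lintegral_lt_top.ne (lintegral_mono (indicator_le_self _ _))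
  have hNfin : ∀ b, ∫⁻ x, N b x ∂μ ≠ ∞ := fun b =>
    ne_top_of_le_ne_top hg.neg.lintegral_lt_top.ne (lintegral_mono (indicator_le_self _ _))
  have hposP : ∀ b, (fun x => ENNReal.ofReal ((S b).indicator g x)) = P b := by
    intro b; ext x; by_cases hx : x ∈ S b <;> simp [P, hx]
  have hnegN : ∀ b, (fun x => ENNReal.ofReal (-(S b).indicator g x)) = N b := by
    intro b; ext x; by_cases hx : x ∈ S b <;> simp [N, hx]
  set T := {b | AEStronglyMeasurable ((S b).indicator g) μ}
  have hT : MeasurableSet T := by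
    simp only [T, aestronglyMeasurable_iff_aemeasurable_ofReal, hposP, hnegN, ofPred_and]
    exact (measurableSet_setOf_aemeasurable_of_antitone hP hPfin).inter
      (measurableSet_setOf_aemeasurable_of_antitone hN hNfin)
  have hPN : Measurable fun b => (∫⁻ x, P b x ∂μ).toReal - (∫⁻ x, N b x ∂μ).toReal :=
    (Antitone.measurable fun a b hab => lintegral_mono (hP hab)).ennreal_toReal.sub
      (Antitone.measurable fun a b hab => lintegral_mono (hN hab)).ennreal_toReal
  convert hPN.indicator hT using 1
  ext b
  by_cases hb : b ∈ T
  · rw [indicator_of_mem hb, integral_eq_lintegral_pos_part_sub_lintegral_neg_part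
      (hg.mono hb (ae_of_all _ fun x => norm_indicator_le_norm_self g x)), hposP, hnegN]
  · rw [indicator_of_notMem hb, integral_non_aestronglyMeasurable hb]

theorem integrable_integral_indicator_of_antitone {ν : Measure β} [IsFiniteMeasure ν]
    {S : β → Set α} (hS : Antitone S) {g : α → ℝ} (hg : Integrable g μ) :
    Integrable (fun b => ∫ x, (S b).indicator g x ∂μ) ν :=
  .of_bound (measurable_integral_indicator_of_antitone hS hg).aestronglyMeasurable
    (∫ x, ‖g x‖ ∂μ) <| ae_of_all _ fun _ => (norm_integral_le_integral_norm _).trans <|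
      integral_mono_of_nonneg (ae_of_all _ fun _ => norm_nonneg _) hg.norm
        (ae_of_all _ fun x => norm_indicator_le_norm_self g x)

end MeasureTheory

theorem bang_bang_minimizer_general (Ω : Set (EuclideanSpace ℝ (Fin 3)))
    (f : EuclideanSpace ℝ (Fin 3) → ℝ) (hf : IntegrableOn f Ω)
    (γ : ℝ)
    (TV : (EuclideanSpace ℝ (Fin 3) → ℝ) → ℝ)
    (F : (EuclideanSpace ℝ (Fin 3) → ℝ) → ℝ)
    (hF : ∀ v, F v = (∫ x in Ω, f x * v x) + γ * TV v)
    (u : EuclideanSpace ℝ (Fin 3) → ℝ) (hu : ∀ x, u x ∈ Icc (0:ℝ) 1)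
    -- coarea formula for the total variation
    (hcoarea : ∀ v : EuclideanSpace ℝ (Fin 3) → ℝ, (∀ x, v x ∈ Icc (0:ℝ) 1) →
      TV v = ∫ t in Ioo (0:ℝ) 1, TV (Set.indicator {y | t < v y} fun _ => 1))
    -- layer-cake formula for the linear term
    (hlayer : (∫ x in Ω, f x * u x)
        = ∫ t in Ioo (0:ℝ) 1, ∫ x in Ω, f x * Set.indicator {y | t < u y} (fun _ => 1) x)
    (hint : IntegrableOn (fun t => F (Set.indicator {y | t < u y} fun _ => 1)) (Ioo (0:ℝ) 1))
    (hmin : ∀ v, (∀ x, v x ∈ Icc (0:ℝ) 1) → F u ≤ F v) :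
    F u = (∫ t in Ioo (0:ℝ) 1, F (Set.indicator {y | t < u y} fun _ => 1)) ∧
    ∃ t ∈ Ico (0:ℝ) 1, ∀ v, (∀ x, v x ∈ Icc (0:ℝ) 1) →
        F (Set.indicator {y | t < u y} fun _ => 1) ≤ F v := by
  set φ := fun t : ℝ => F ({y | t < u y}.indicator fun _ => 1)
  set A := fun t : ℝ => ∫ x in Ω, f x * {y | t < u y}.indicator (fun _ => 1) x
  have : IsProbabilityMeasure (volume.restrict (Ioo (0:ℝ) 1)) := ⟨by simp⟩
  have hA : IntegrableOn A (Ioo (0:ℝ) 1) := by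
    have hS : Antitone fun t : ℝ => {y | t < u y} := fun _ _ hst _ hy => hst.trans_lt hy
    simpa [IntegrableOn, A, ← indicator_mul_right] using
      integrable_integral_indicator_of_antitone hS hf
  have hmean : F u = ∫ t in Ioo (0:ℝ) 1, φ t := calc
    F u = (∫ t in Ioo (0:ℝ) 1, A t)
        + ∫ t in Ioo (0:ℝ) 1, γ * TV ({y | t < u y}.indicator fun _ => 1) := by
      rw [hF, hlayer, hcoarea u hu, integral_const_mul]
    _ = (∫ t in Ioo (0:ℝ) 1, A t) + ∫ t in Ioo (0:ℝ) 1, (φ t - A t) := by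
      simp only [φ, A, hF, add_sub_cancel_left]
    _ = ∫ t in Ioo (0:ℝ) 1, φ t := by rw [integral_sub hint hA, add_sub_cancel]
  obtain ⟨t, ht, hφt⟩ := exists_notMem_null_le_integral hint (ae_restrict_mem measurableSet_Ioo)
  exact ⟨hmean, t, Ioo_subset_Ico_self (not_not.1 ht),
    fun v hv => (hφt.trans hmean.ge).trans (hmin v hv)⟩

/-- If `u` minimizes `F v = ∫_Ω f v + γ |Dv|(Ω)` over `[0,1]`-valued functions, then by the
coarea and layer-cake formulas `F u = ∫_0^1 F (𝟙_{u > t}) dt`, and consequently some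
super-level indicator `𝟙_{u > t}` is also a minimizer. -/
theorem bang_bang_minimizer (Ω : Set (EuclideanSpace ℝ (Fin 3))) (hΩ : IsOpen Ω)
    (f : EuclideanSpace ℝ (Fin 3) → ℝ) (hf : IntegrableOn f Ω)
    (γ : ℝ) (hγ : 0 < γ)
    (TV : (EuclideanSpace ℝ (Fin 3) → ℝ) → ℝ)
    (F : (EuclideanSpace ℝ (Fin 3) → ℝ) → ℝ)
    (hF : ∀ v, F v = (∫ x in Ω, f x * v x) + γ * TV v)
    (u : EuclideanSpace ℝ (Fin 3) → ℝ) (hu : ∀ x, u x ∈ Icc (0:ℝ) 1)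
    -- coarea formula for the total variation
    (hcoarea : ∀ v : EuclideanSpace ℝ (Fin 3) → ℝ, (∀ x, v x ∈ Icc (0:ℝ) 1) →
      TV v = ∫ t in Ioo (0:ℝ) 1, TV (Set.indicator {y | t < v y} fun _ => 1))
    -- layer-cake formula for the linear term
    (hlayer : (∫ x in Ω, f x * u x)
        = ∫ t in Ioo (0:ℝ) 1, ∫ x in Ω, f x * Set.indicator {y | t < u y} (fun _ => 1) x)
    (hint : IntegrableOn (fun t => F (Set.indicator {y | t < u y} fun _ => 1)) (Ioo (0:ℝ) 1))
    (hmin : ∀ v, (∀ x, v x ∈ Icc (0:ℝ) 1) → F u ≤ F v) :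
    F u = (∫ t in Ioo (0:ℝ) 1, F (Set.indicator {y | t < u y} fun _ => 1)) ∧
    ∃ t ∈ Ico (0:ℝ) 1, ∀ v, (∀ x, v x ∈ Icc (0:ℝ) 1) →
        F (Set.indicator {y | t < u y} fun _ => 1) ≤ F v :=
  bang_bang_minimizer_general Ω f hf γ TV F hF u hu hcoarea hlayer hint hmin
end

section
/- Let E : A → [0,∞) be a functional on a class A of finite ℝ^N-valued measures, and suppose E has the approximate-superposition property: for all ρ₁, ρ₂ ∈ A and all δ > 0 there exists ρ ∈ A with ρ(ℝ³) = ρ₁(ℝ³) + ρ₂(ℝ³) and E(ρ) ≤ E(ρ₁) + E(ρ₂) + δ. Then the function φ(ξ) = inf { liminf_k E(ρ_k)/z_k : ρ_k ∈ A, z_k > 0, ρ_k(ℝ³)/z_k → ξ } is subadditive: φ(ξ₁ + ξ₂) ≤ φ(ξ₁) + φ(ξ₂) for all ξ₁, ξ₂ ∈ ℝ^N. -/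
/-!
Normalized cells `(z⁻¹ • mass ρ, E ρ / z)`, made upward closed in the energy, form a set whose
closure has `φ` as its lower boundary: every liminf in the cell formula for `ξ` gives a point
`(ξ, L)` of the closure, and every such point is reached by a sequence witnessing `φ ξ ≤ L`.
Superposing `⌈Z / z₁⌉` copies of `ρ₁` with `⌈Z / z₂⌉` copies of `ρ₂` and normalizing by `Z → ∞`
puts the sum of two cells into the closure, so the closure is closed under addition, which is
the subadditivity of `φ`.
-/

open Filter Topology
open scoped ENNReal

section

variable {M ι : Type*} {mass : ι → M} {E : ι → ℝ}

section Superposition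

variable [AddCommMonoid M]

def HasApproxSuperposition (mass : ι → M) (E : ι → ℝ) : Prop :=
  ∀ ρ₁ ρ₂ : ι, ∀ δ : ℝ, 0 < δ → ∃ ρ : ι, mass ρ = mass ρ₁ + mass ρ₂ ∧ E ρ ≤ E ρ₁ + E ρ₂ + δ

namespace HasApproxSuperposition

theorem exists_nsmul (hsuper : HasApproxSuperposition mass E) (ρ₀ : ι) {n : ℕ} (hn : 0 < n)
    {δ : ℝ} (hδ : 0 < δ) :
    ∃ ρ, mass ρ = n • mass ρ₀ ∧ E ρ ≤ n * E ρ₀ + δ := by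
  induction n, hn using Nat.le_induction generalizing δ with
  | base => exact ⟨ρ₀, by simp, by simp; linarith⟩
  | succ n _ ih =>
    obtain ⟨ρ', hmass', hE'⟩ := ih (half_pos hδ)
    obtain ⟨ρ, hmass, hE⟩ := hsuper ρ' ρ₀ (δ / 2) (half_pos hδ)
    refine ⟨ρ, by rw [hmass, hmass', succ_nsmul], ?_⟩
    push_cast
    linarith

theorem exists_nsmul_add_nsmul (hsuper : HasApproxSuperposition mass E) (ρ₁ ρ₂ : ι)
    {m₁ m₂ : ℕ} (hm₁ : 0 < m₁) (hm₂ : 0 < m₂) {δ : ℝ} (hδ : 0 < δ) :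
    ∃ ρ, mass ρ = m₁ • mass ρ₁ + m₂ • mass ρ₂ ∧ E ρ ≤ m₁ * E ρ₁ + m₂ * E ρ₂ + δ := by
  obtain ⟨σ₁, hmass₁, hE₁⟩ := hsuper.exists_nsmul ρ₁ hm₁ (by positivity : 0 < δ / 3)
  obtain ⟨σ₂, hmass₂, hE₂⟩ := hsuper.exists_nsmul ρ₂ hm₂ (by positivity : 0 < δ / 3)
  obtain ⟨ρ, hmass, hE⟩ := hsuper σ₁ σ₂ (δ / 3) (by positivity)
  exact ⟨ρ, by rw [hmass, hmass₁, hmass₂], by linarith⟩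

end HasApproxSuperposition

end Superposition

def normalizedEpigraph [SMul ℝ M] (mass : ι → M) (E : ι → ℝ) : Set (M × ℝ≥0∞) :=
  {p | ∃ ρ z, 0 < z ∧ z⁻¹ • mass ρ = p.1 ∧ ENNReal.ofReal (E ρ / z) ≤ p.2}

section Closure

variable [NormedAddCommGroup M] [NormedSpace ℝ M]

namespace HasApproxSuperposition

/-- Superpose `⌈Z / z₁⌉` copies of `ρ₁` with `⌈Z / z₂⌉` copies of `ρ₂` and normalize by `Z`;
each coefficient is the number of copies used relative to the ideal `Z / zᵢ`. -/
theorem mem_normalizedEpigraph (hsuper : HasApproxSuperposition mass E) {ρ₁ ρ₂ : ι}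
    {z₁ z₂ Z : ℝ} {e₁ e₂ : ℝ≥0∞} (hz₁ : 0 < z₁) (hz₂ : 0 < z₂) (hZ : 0 < Z)
    (he₁ : ENNReal.ofReal (E ρ₁ / z₁) ≤ e₁) (he₂ : ENNReal.ofReal (E ρ₂ / z₂) ≤ e₂) :
    ((⌈Z / z₁⌉₊ / (Z / z₁)) • z₁⁻¹ • mass ρ₁ + (⌈Z / z₂⌉₊ / (Z / z₂)) • z₂⁻¹ • mass ρ₂,
      ENNReal.ofReal (⌈Z / z₁⌉₊ / (Z / z₁)) * e₁ + ENNReal.ofReal (⌈Z / z₂⌉₊ / (Z / z₂)) * e₂ +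
        ENNReal.ofReal Z⁻¹) ∈ normalizedEpigraph mass E := by
  set r₁ : ℝ := ⌈Z / z₁⌉₊ / (Z / z₁)
  set r₂ : ℝ := ⌈Z / z₂⌉₊ / (Z / z₂)
  obtain ⟨ρ, hmass, hE⟩ := hsuper.exists_nsmul_add_nsmul ρ₁ ρ₂
    (Nat.ceil_pos.mpr (by positivity : 0 < Z / z₁))
    (Nat.ceil_pos.mpr (by positivity : 0 < Z / z₂)) one_pos
  refine ⟨ρ, Z, hZ, ?_, ?_⟩
  · rw [hmass, ← Nat.cast_smul_eq_nsmul ℝ, ← Nat.cast_smul_eq_nsmul ℝ, smul_add]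
    simp only [smul_smul, r₁, r₂]
    congr 2 <;> field_simp
  · have hbound : E ρ / Z ≤ r₁ * (E ρ₁ / z₁) + r₂ * (E ρ₂ / z₂) + Z⁻¹ := by
      calc E ρ / Z ≤ (⌈Z / z₁⌉₊ * E ρ₁ + ⌈Z / z₂⌉₊ * E ρ₂ + 1) / Z := by gcongr
        _ = r₁ * (E ρ₁ / z₁) + r₂ * (E ρ₂ / z₂) + Z⁻¹ := by simp only [r₁, r₂]; field_simp
    have hr₁ : 0 ≤ r₁ := by positivity
    have hr₂ : 0 ≤ r₂ := by positivity
    calc ENNReal.ofReal (E ρ / Z)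
        ≤ ENNReal.ofReal (r₁ * (E ρ₁ / z₁)) + ENNReal.ofReal (r₂ * (E ρ₂ / z₂)) +
            ENNReal.ofReal Z⁻¹ :=
          (ENNReal.ofReal_le_ofReal hbound).trans <|
            ENNReal.ofReal_add_le.trans (add_le_add_left ENNReal.ofReal_add_le _)
      _ ≤ ENNReal.ofReal r₁ * e₁ + ENNReal.ofReal r₂ * e₂ + ENNReal.ofReal Z⁻¹ := by
          rw [ENNReal.ofReal_mul hr₁, ENNReal.ofReal_mul hr₂]
          gcongr

theorem add_mem_closure_normalizedEpigraph_of_mem (hsuper : HasApproxSuperposition mass E)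
    {p₁ p₂ : M × ℝ≥0∞} (hp₁ : p₁ ∈ normalizedEpigraph mass E)
    (hp₂ : p₂ ∈ normalizedEpigraph mass E) : p₁ + p₂ ∈ closure (normalizedEpigraph mass E) := by
  obtain ⟨x₁, e₁⟩ := p₁
  obtain ⟨x₂, e₂⟩ := p₂
  obtain ⟨ρ₁, z₁, hz₁, rfl, he₁⟩ := hp₁
  obtain ⟨ρ₂, z₂, hz₂, rfl, he₂⟩ := hp₂
  have hratio : ∀ {z : ℝ}, 0 < z → Tendsto (fun Z : ℝ ↦ (⌈Z / z⌉₊ : ℝ) / (Z / z)) atTop (𝓝 1) :=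
    fun hz ↦ tendsto_nat_ceil_div_atTop.comp (tendsto_id.atTop_div_const hz)
  refine mem_closure_of_tendsto (Tendsto.prodMk_nhds ?_ ?_)
    ((eventually_gt_atTop 0).mono fun Z hZ ↦ hsuper.mem_normalizedEpigraph hz₁ hz₂ hZ he₁ he₂)
  · simpa using ((hratio hz₁).smul_const (z₁⁻¹ • mass ρ₁)).add
      ((hratio hz₂).smul_const (z₂⁻¹ • mass ρ₂))
  · have hinv : Tendsto (fun Z : ℝ ↦ ENNReal.ofReal Z⁻¹) atTop (𝓝 0) := by
      simpa using ENNReal.tendsto_ofReal tendsto_inv_atTop_zero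
    have hcoeff : ∀ {z : ℝ} (e : ℝ≥0∞), 0 < z →
        Tendsto (fun Z : ℝ ↦ ENNReal.ofReal ((⌈Z / z⌉₊ : ℝ) / (Z / z)) * e) atTop (𝓝 e) :=
      fun e hz ↦ by
        simpa using ENNReal.Tendsto.mul_const (ENNReal.tendsto_ofReal (hratio hz))
          (.inl (by simp))
    simpa using ((hcoeff e₁ hz₁).add (hcoeff e₂ hz₂)).add hinv

theorem add_mem_closure_normalizedEpigraph (hsuper : HasApproxSuperposition mass E)
    {p₁ p₂ : M × ℝ≥0∞} (hp₁ : p₁ ∈ closure (normalizedEpigraph mass E))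
    (hp₂ : p₂ ∈ closure (normalizedEpigraph mass E)) :
    p₁ + p₂ ∈ closure (normalizedEpigraph mass E) :=
  closure_closure (s := normalizedEpigraph mass E) ▸
    map_mem_closure₂ continuous_add hp₁ hp₂ fun _ hq₁ _ hq₂ ↦
      hsuper.add_mem_closure_normalizedEpigraph_of_mem hq₁ hq₂

end HasApproxSuperposition

theorem mk_liminf_mem_closure_normalizedEpigraph {ρ : ℕ → ι} {z : ℕ → ℝ} {ξ : M}
    (hz : ∀ k, 0 < z k) (hξ : Tendsto (fun k ↦ (z k)⁻¹ • mass (ρ k)) atTop (𝓝 ξ)) :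
    (ξ, atTop.liminf fun k ↦ ENNReal.ofReal (E (ρ k) / z k)) ∈
      closure (normalizedEpigraph mass E) := by
  obtain ⟨σ, hliminf, hσ⟩ :=
    exists_seq_tendsto_liminf (f := atTop) (u := fun k ↦ ENNReal.ofReal (E (ρ k) / z k))
  exact mem_closure_of_tendsto ((hξ.comp hσ).prodMk_nhds hliminf)
    (.of_forall fun n ↦ ⟨ρ (σ n), z (σ n), hz _, rfl, le_rfl⟩)

theorem exists_seq_liminf_le_of_mem_closure_normalizedEpigraph {ξ : M} {L : ℝ≥0∞}
    (h : (ξ, L) ∈ closure (normalizedEpigraph mass E)) :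
    ∃ (ρ : ℕ → ι) (z : ℕ → ℝ), (∀ k, 0 < z k) ∧
      Tendsto (fun k ↦ (z k)⁻¹ • mass (ρ k)) atTop (𝓝 ξ) ∧
      atTop.liminf (fun k ↦ ENNReal.ofReal (E (ρ k) / z k)) ≤ L := by
  obtain ⟨p, hp, hlim⟩ := mem_closure_iff_seq_limit.mp h
  choose ρ z hz hmass he using hp
  refine ⟨ρ, z, hz, ?_, ?_⟩
  · simpa only [hmass, Function.comp_def] using (continuous_fst.tendsto _).comp hlim
  · calc atTop.liminf (fun k ↦ ENNReal.ofReal (E (ρ k) / z k))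
        ≤ atTop.liminf (fun k ↦ (p k).2) := liminf_le_liminf (.of_forall he)
      _ = L := ((continuous_snd.tendsto _).comp hlim).liminf_eq

end Closure

end

theorem cell_energy_subadditive_general {N : ℕ} {ι : Type*}
    (mass : ι → (Fin N → ℝ)) (E : ι → ℝ)
    (hsuper : ∀ ρ₁ ρ₂ : ι, ∀ δ : ℝ, 0 < δ →
      ∃ ρ : ι, mass ρ = mass ρ₁ + mass ρ₂ ∧ E ρ ≤ E ρ₁ + E ρ₂ + δ)
    (φ : (Fin N → ℝ) → ℝ≥0∞)
    (hφ : ∀ ξ, φ ξ = sInf {L : ℝ≥0∞ | ∃ ρ : ℕ → ι, ∃ z : ℕ → ℝ, (∀ k, 0 < z k) ∧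
        Tendsto (fun k => (z k)⁻¹ • mass (ρ k)) atTop (nhds ξ) ∧
        L = Filter.atTop.liminf fun k => ENNReal.ofReal (E (ρ k) / z k)}) :
    ∀ ξ₁ ξ₂ : Fin N → ℝ, φ (ξ₁ + ξ₂) ≤ φ ξ₁ + φ ξ₂ := by
  intro ξ₁ ξ₂
  rw [hφ ξ₁, hφ ξ₂, ENNReal.sInf_add]
  refine le_iInf₂ fun _ ⟨ρ₁, z₁, hz₁, hξ₁, hL₁⟩ ↦ ?_
  rw [ENNReal.add_sInf]
  refine le_iInf₂ fun _ ⟨ρ₂, z₂, hz₂, hξ₂, hL₂⟩ ↦ ?_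
  obtain ⟨ρ, z, hz, hξ, hle⟩ := exists_seq_liminf_le_of_mem_closure_normalizedEpigraph <|
    HasApproxSuperposition.add_mem_closure_normalizedEpigraph hsuper
      (mk_liminf_mem_closure_normalizedEpigraph hz₁ hξ₁)
      (mk_liminf_mem_closure_normalizedEpigraph hz₂ hξ₂)
  rw [hφ, hL₁, hL₂]
  refine (sInf_le ?_).trans hle
  exact ⟨ρ, z, hz, hξ, rfl⟩

/-- If the energy `E` has the approximate-superposition property (two admissible measures can
be combined with total mass adding up and energy almost adding up), then the cell-formula
density `φ` is subadditive. -/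
theorem cell_energy_subadditive {N : ℕ} {ι : Type*}
    (mass : ι → (Fin N → ℝ)) (E : ι → ℝ) (hE : ∀ ρ, 0 ≤ E ρ)
    (hsuper : ∀ ρ₁ ρ₂ : ι, ∀ δ : ℝ, 0 < δ →
      ∃ ρ : ι, mass ρ = mass ρ₁ + mass ρ₂ ∧ E ρ ≤ E ρ₁ + E ρ₂ + δ)
    (φ : (Fin N → ℝ) → ℝ≥0∞)
    (hφ : ∀ ξ, φ ξ = sInf {L : ℝ≥0∞ | ∃ ρ : ℕ → ι, ∃ z : ℕ → ℝ, (∀ k, 0 < z k) ∧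
        Tendsto (fun k => (z k)⁻¹ • mass (ρ k)) atTop (nhds ξ) ∧
        L = Filter.atTop.liminf fun k => ENNReal.ofReal (E (ρ k) / z k)}) :
    ∀ ξ₁ ξ₂ : Fin N → ℝ, φ (ξ₁ + ξ₂) ≤ φ ξ₁ + φ ξ₂ :=
  cell_energy_subadditive_general mass E hsuper φ hφ
end

section
/- Let M ∈ ℕ, and let x_1, …, x_M be distinct points in ℝ³. For every δ > 0 there exists a translation z ∈ [0,δ)³ of the standard partition of ℝ³ into half-open cubes of side length δ (cubes Q_{k+z,δ} = z + δk + [−δ/2,δ/2)³, k ∈ δℤ³) such that Σ over pairs (i,j) with x_i, x_j lying in different cubes of 1/|x_i − x_j| is at most 4M²/δ. -/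
/-!
Two reals `a, b` fall into different cells of the grid `s + δℤ` only when `s mod δ` lies in an
arc of length `|a - b|`, so the separating offsets `s ∈ [0, δ)` have measure at most `|a - b|`.
Averaging the weighted count of separated pairs over `s ∈ [0, δ)` then yields, coordinate by
coordinate, an offset for which the pairs separated in that coordinate contribute at most
`M² / δ`, because `|x_i m - x_j m| / |x_i - x_j| ≤ 1`. Points in different cubes are separated
in some coordinate, so the three coordinates together contribute at most `3M² / δ`.
-/

open Set MeasureTheory

lemma mem_Ioc_union_Ioc_of_floor_sub_ne {u v t : ℝ} (huv : u ≤ v) (ht : t ∈ Ico (0 : ℝ) 1)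
    (hne : ⌊u - t⌋ ≠ ⌊v - t⌋) :
    t ∈ Ioc (u - ⌊v⌋) (v - ⌊v⌋) ∪ Ioc (u - ⌊v⌋ + 1) (v - ⌊v⌋ + 1) := by
  obtain ⟨ht0, ht1⟩ := ht
  have hv₀ := Int.floor_le v
  have hv₁ := Int.lt_floor_add_one v
  have hle : ⌊u - t⌋ ≤ ⌊v - t⌋ := Int.floor_le_floor (by linarith)
  have hlt : ⌊u - t⌋ < ⌊v - t⌋ := lt_of_le_of_ne hle hne
  rcases le_or_gt t (v - ⌊v⌋) with ht_le | ht_gt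
  · have hfloor : ⌊v - t⌋ = ⌊v⌋ := Int.floor_eq_iff.mpr ⟨by linarith, by linarith⟩
    rw [hfloor, Int.floor_lt] at hlt
    exact Or.inl ⟨by linarith, ht_le⟩
  · have hfloor : ⌊v - t⌋ = ⌊v⌋ - 1 :=
      Int.floor_eq_iff.mpr ⟨by push_cast; linarith, by push_cast; linarith⟩
    rw [hfloor, Int.floor_lt] at hlt
    push_cast at hlt
    exact Or.inr ⟨by linarith, by linarith⟩

lemma volume_Ioc_union_Ioc_add_one_inter_Ico_le {α β : ℝ} (hβ : 0 ≤ β) :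
    volume ((Ioc α β ∪ Ioc (α + 1) (β + 1)) ∩ Ico 0 1) ≤ ENNReal.ofReal (β - α) := by
  have hsub : (Ioc α β ∪ Ioc (α + 1) (β + 1)) ∩ Ico 0 1 ⊆ Icc (max α 0) β ∪ Icc (α + 1) 1 := by
    rintro t ⟨ht | ht, ht0, ht1⟩
    · exact Or.inl ⟨max_le ht.1.le ht0, ht.2⟩
    · exact Or.inr ⟨ht.1.le, ht1.le⟩
  refine (measure_mono hsub).trans <| (measure_union_le _ _).trans ?_
  rw [Real.volume_Icc, Real.volume_Icc]
  rcases le_total 0 α with hα | hα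
  · rw [max_eq_left hα, ENNReal.ofReal_of_nonpos (show 1 - (α + 1) ≤ 0 by linarith), add_zero]
  · rw [max_eq_right hα, ← ENNReal.ofReal_add (by linarith) (by linarith)]
    exact ENNReal.ofReal_le_ofReal (by linarith)

lemma volume_floor_sub_ne_inter_Ico_le (u v : ℝ) :
    volume ({t | ⌊u - t⌋ ≠ ⌊v - t⌋} ∩ Ico 0 1) ≤ ENNReal.ofReal |u - v| := by
  wlog huv : u ≤ v generalizing u v
  · simpa only [ne_comm, abs_sub_comm] using this v u (le_of_not_ge huv)
  calc volume ({t | ⌊u - t⌋ ≠ ⌊v - t⌋} ∩ Ico 0 1)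
      ≤ volume ((Ioc (u - ⌊v⌋) (v - ⌊v⌋) ∪ Ioc (u - ⌊v⌋ + 1) (v - ⌊v⌋ + 1)) ∩ Ico 0 1) :=
        measure_mono fun t ⟨hne, ht⟩ => ⟨mem_Ioc_union_Ioc_of_floor_sub_ne huv ht hne, ht⟩
    _ ≤ ENNReal.ofReal (v - ⌊v⌋ - (u - ⌊v⌋)) :=
        volume_Ioc_union_Ioc_add_one_inter_Ico_le (Int.fract_nonneg v)
    _ = ENNReal.ofReal |u - v| := by rw [abs_of_nonpos (by linarith)]; ring_nf

lemma volume_floor_div_ne_inter_Ico_le (a b θ : ℝ) {δ : ℝ} (hδ : 0 < δ) :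
    volume ({s | ⌊(a - s) / δ + θ⌋ ≠ ⌊(b - s) / δ + θ⌋} ∩ Ico 0 δ) ≤ ENNReal.ofReal |a - b| := by
  have hset : {s | ⌊(a - s) / δ + θ⌋ ≠ ⌊(b - s) / δ + θ⌋} ∩ Ico 0 δ =
      (δ⁻¹ * ·) ⁻¹' ({t | ⌊(a / δ + θ) - t⌋ ≠ ⌊(b / δ + θ) - t⌋} ∩ Ico 0 1) := by
    ext s
    have hshift : ∀ c, (c - s) / δ + θ = c / δ + θ - δ⁻¹ * s := fun c => by ring
    simp only [mem_inter_iff, mem_ofPred_eq, mem_preimage, mem_Ico, hshift,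
      inv_mul_lt_one₀ hδ, mul_nonneg_iff_of_pos_left (inv_pos.2 hδ)]
  rw [hset, Real.volume_preimage_mul_left (inv_ne_zero hδ.ne')]
  calc ENNReal.ofReal |δ⁻¹⁻¹| * volume ({t | ⌊(a / δ + θ) - t⌋ ≠ ⌊(b / δ + θ) - t⌋} ∩ Ico 0 1)
      ≤ ENNReal.ofReal δ * ENNReal.ofReal |(a / δ + θ) - (b / δ + θ)| := by
        rw [inv_inv, abs_of_pos hδ]
        gcongr
        exact volume_floor_sub_ne_inter_Ico_le _ _
    _ = ENNReal.ofReal |a - b| := by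
        have hdiff : (a / δ + θ) - (b / δ + θ) = (a - b) / δ := by ring
        rw [← ENNReal.ofReal_mul hδ.le, hdiff, abs_div, abs_of_pos hδ, mul_div_cancel₀ _ hδ.ne']

lemma exists_mem_Ico_sum_floor_div_ne_le {ι : Type*} [Fintype ι] (a : ι → ℝ) {w : ι → ι → ℝ}
    (hw : ∀ i j, 0 ≤ w i j) (θ : ℝ) {δ : ℝ} (hδ : 0 < δ) :
    ∃ s ∈ Ico (0 : ℝ) δ,
      (∑ i, ∑ j, if ⌊(a i - s) / δ + θ⌋ ≠ ⌊(a j - s) / δ + θ⌋ then w i j else 0)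
        ≤ (∑ i, ∑ j, w i j * |a i - a j|) / δ := by
  set A : ι → ι → Set ℝ := fun i j => {s | ⌊(a i - s) / δ + θ⌋ ≠ ⌊(a j - s) / δ + θ⌋}
  have hA : ∀ i j, MeasurableSet (A i j) := by
    have hm : ∀ c : ℝ, Measurable fun s : ℝ => ⌊(c - s) / δ + θ⌋ := fun c =>
      (((measurable_const.sub measurable_id).div_const δ).add_const θ).floor
    exact fun i j => (measurableSet_eq_fun (hm (a i)) (hm (a j))).compl
  have hsum : ∀ s, (∑ i, ∑ j, if ⌊(a i - s) / δ + θ⌋ ≠ ⌊(a j - s) / δ + θ⌋ then w i j else 0)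
      = ∑ i, ∑ j, (A i j).indicator (fun _ => w i j) s := fun s => by
    simp only [indicator_apply, A, mem_ofPred_eq]
  have hint : ∀ i j, IntegrableOn ((A i j).indicator fun _ => w i j) (Ico 0 δ) :=
    fun i j => (integrableOn_const measure_Ico_lt_top.ne).indicator (hA i j)
  have hvol : volume (Ico (0 : ℝ) δ) ≠ 0 := by simp [hδ]
  obtain ⟨s, hs, hle⟩ := exists_le_setAverage hvol measure_Ico_lt_top.ne
    (integrable_finsetSum _ fun i _ => integrable_finsetSum _ fun j _ => hint i j)
  refine ⟨s, hs, ?_⟩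
  rw [hsum]
  refine hle.trans ?_
  rw [setAverage_eq, Real.volume_real_Ico_of_le hδ.le, sub_zero, smul_eq_mul, inv_mul_eq_div]
  gcongr
  rw [integral_finsetSum _ fun i _ => integrable_finsetSum _ fun j _ => hint i j]
  refine Finset.sum_le_sum fun i _ => ?_
  rw [integral_finsetSum _ fun j _ => hint i j]
  refine Finset.sum_le_sum fun j _ => ?_
  rw [integral_indicator_const _ (hA i j), measureReal_restrict_apply (hA i j), smul_eq_mul,
    mul_comm]
  exact mul_le_mul_of_nonneg_left (ENNReal.toReal_le_of_le_ofReal (abs_nonneg _)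
    (volume_floor_div_ne_inter_Ico_le (a i) (a j) θ hδ)) (hw i j)

lemma ite_not_forall_le_sum_ite {ι : Type*} [Fintype ι] {P : ι → Prop} [DecidablePred P]
    {c : ℝ} (hc : 0 ≤ c) : (if ¬ ∀ m, P m then c else 0) ≤ ∑ m, if ¬ P m then c else 0 := by
  have hterm : ∀ m, 0 ≤ if ¬ P m then c else 0 := fun m => by positivity
  by_cases h : ∀ m, P m
  · rw [if_neg (not_not_intro h)]
    exact Finset.sum_nonneg fun m _ => hterm m
  · obtain ⟨m, hm⟩ := not_forall.mp h
    calc (if ¬ ∀ m, P m then c else 0) = if ¬ P m then c else 0 := by rw [if_pos h, if_pos hm]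
      _ ≤ ∑ m, if ¬ P m then c else 0 :=
        Finset.single_le_sum (fun m _ => hterm m) (Finset.mem_univ m)

lemma one_div_dist_mul_abs_apply_le_one {ι : Type*} [Fintype ι] (u v : EuclideanSpace ℝ ι)
    (m : ι) : 1 / dist u v * |u m - v m| ≤ 1 := by
  rw [one_div_mul_eq_div]
  exact div_le_one_of_le₀ (PiLp.dist_apply_le u v m) dist_nonneg

lemma exists_mem_Ico_sum_one_div_dist_floor_ne_le {ι κ : Type*} [Fintype ι] [Fintype κ]
    (x : ι → EuclideanSpace ℝ κ) (m : κ) (θ : ℝ) {δ : ℝ} (hδ : 0 < δ) :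
    ∃ s ∈ Ico (0 : ℝ) δ,
      (∑ i, ∑ j, if ⌊(x i m - s) / δ + θ⌋ ≠ ⌊(x j m - s) / δ + θ⌋
        then 1 / dist (x i) (x j) else 0)
        ≤ (Fintype.card ι : ℝ) ^ 2 / δ := by
  obtain ⟨s, hs, hle⟩ :=
    exists_mem_Ico_sum_floor_div_ne_le (fun i => x i m)
      (w := fun i j => 1 / dist (x i) (x j)) (fun _ _ => by positivity) θ hδ
  refine ⟨s, hs, hle.trans ?_⟩
  gcongr
  calc (∑ i, ∑ j, 1 / dist (x i) (x j) * |x i m - x j m|) ≤ ∑ _i : ι, ∑ _j : ι, (1 : ℝ) :=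
        Finset.sum_le_sum fun i _ => Finset.sum_le_sum fun j _ =>
          one_div_dist_mul_abs_apply_le_one (x i) (x j) m
    _ = (Fintype.card ι : ℝ) ^ 2 := by simp [sq]

theorem grid_offset_selection_general (M : ℕ) (x : Fin M → EuclideanSpace ℝ (Fin 3))
    (δ : ℝ) (hδ : 0 < δ) :
    ∃ z : EuclideanSpace ℝ (Fin 3), (∀ i, z i ∈ Ico (0:ℝ) δ) ∧
      (∑ i, ∑ j,
          if i ≠ j ∧ ¬ (∀ m : Fin 3, ⌊(x i m - z m) / δ + 1/2⌋ = ⌊(x j m - z m) / δ + 1/2⌋)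
          then 1 / dist (x i) (x j) else 0)
        ≤ 4 * (M : ℝ) ^ 2 / δ := by
  choose s hs hsum using fun m => exists_mem_Ico_sum_one_div_dist_floor_ne_le x m (1/2) hδ
  refine ⟨WithLp.toLp 2 s, hs, ?_⟩
  calc (∑ i, ∑ j,
          if i ≠ j ∧ ¬ (∀ m : Fin 3, ⌊(x i m - s m) / δ + 1/2⌋ = ⌊(x j m - s m) / δ + 1/2⌋)
          then 1 / dist (x i) (x j) else 0)
      ≤ ∑ i, ∑ j, ∑ m : Fin 3,
          if ⌊(x i m - s m) / δ + 1/2⌋ ≠ ⌊(x j m - s m) / δ + 1/2⌋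
          then 1 / dist (x i) (x j) else 0 := by
        refine Finset.sum_le_sum fun i _ => Finset.sum_le_sum fun j _ => ?_
        refine le_trans ?_ (ite_not_forall_le_sum_ite (by positivity))
        split_ifs with h h'
        · exact absurd h' h.2
        all_goals first | exact le_rfl | positivity
    _ = ∑ m : Fin 3, ∑ i, ∑ j,
          if ⌊(x i m - s m) / δ + 1/2⌋ ≠ ⌊(x j m - s m) / δ + 1/2⌋
          then 1 / dist (x i) (x j) else 0 := by
        simp only [Finset.sum_comm (γ := Fin 3)]
    _ ≤ ∑ _m : Fin 3, (M : ℝ) ^ 2 / δ :=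
        Finset.sum_le_sum fun m _ => by simpa only [Fintype.card_fin] using hsum m
    _ ≤ 4 * (M : ℝ) ^ 2 / δ := by
        rw [Finset.sum_const, Finset.card_univ, Fintype.card_fin, nsmul_eq_mul, mul_div_assoc]
        gcongr
        norm_num

/-- Cube-selection lemma: for distinct points `x_1,…,x_M` in `ℝ³` and any `δ > 0`, there is
an offset `z ∈ [0,δ)³` of the grid of half-open cubes of side `δ` such that the sum of
`1/|x_i − x_j|` over pairs lying in different cubes is at most `4M²/δ`. -/
theorem grid_offset_selection (M : ℕ) (x : Fin M → EuclideanSpace ℝ (Fin 3))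
    (hx : Function.Injective x) (δ : ℝ) (hδ : 0 < δ) :
    ∃ z : EuclideanSpace ℝ (Fin 3), (∀ i, z i ∈ Ico (0:ℝ) δ) ∧
      (∑ i, ∑ j,
          if i ≠ j ∧ ¬ (∀ m : Fin 3, ⌊(x i m - z m) / δ + 1/2⌋ = ⌊(x j m - z m) / δ + 1/2⌋)
          then 1 / dist (x i) (x j) else 0)
        ≤ 4 * (M : ℝ) ^ 2 / δ :=
  grid_offset_selection_general M x δ hδ
end

section
/- Let x, y ∈ ℝ³ with x ≠ y, let δ > 0, and consider the shifted grid of half-open cubes Q_{k+z,δ} = z + δk + [−δ/2, δ/2)³ for k ∈ δℤ³, z ∈ [0,δ)³. Then the Lebesgue measure of the set of offsets z ∈ [0,δ)³ for which x and y lie in different cubes of the grid is at most 3·min(|x−y|, δ)·δ². -/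
open Set MeasureTheory

/-!
In one coordinate, an offset `t ∈ [0, δ)` separates `a ≤ b` exactly when a cube boundary of the
grid lies in `(a, b]`, i.e. when `t` lies in one of the `δℤ`-translates of a fixed translate of
`(a, b]`. Since the `δℤ`-translates of `[0, δ)` tile `ℝ`, these translates meet `[0, δ)` in a set
of measure at most `b - a`. Points separated by the grid are separated in some coordinate, so a
union bound over the three coordinate slabs, each of cross-section `δ²`, gives the factor `3`.
-/

theorem exists_int_mem_Ioc_of_floor_ne {u v : ℝ} (huv : u ≤ v) (h : ⌊u⌋ ≠ ⌊v⌋) :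
    ∃ n : ℤ, u < n ∧ (n : ℝ) ≤ v := by
  refine ⟨⌊v⌋, ?_, Int.floor_le v⟩
  have : ⌊u⌋ + 1 ≤ ⌊v⌋ := lt_of_le_of_ne (Int.floor_le_floor huv) h
  calc u < ⌊u⌋ + 1 := Int.lt_floor_add_one u
    _ ≤ ⌊v⌋ := by exact_mod_cast this

section Translates

variable {μ : Measure ℝ} {s : Set ℝ} {p : ℝ}

theorem tsum_measure_inter_Ico_add_zsmul (hs : MeasurableSet s) (hp : 0 < p) (a : ℝ) :
    ∑' n : ℤ, μ (s ∩ Ico (a + n • p) (a + (n + 1) • p)) = μ s := by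
  rw [← measure_iUnion, ← inter_iUnion, iUnion_Ico_add_zsmul hp, inter_univ]
  · exact fun m n hmn => (pairwise_disjoint_Ico_add_zsmul a p hmn).mono inter_subset_right
      inter_subset_right
  · exact fun n => hs.inter measurableSet_Ico

theorem measure_Ico_inter_preimage_add [μ.IsAddRightInvariant] (m : ℝ) :
    μ (Ico 0 p ∩ (· + m) ⁻¹' s) = μ (s ∩ Ico m (m + p)) := by
  have : Ico 0 p = (· + m) ⁻¹' Ico m (m + p) := by simp [preimage_add_const_Ico]
  rw [this, ← preimage_inter, measure_preimage_add_right, inter_comm]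

theorem measure_Ico_inter_iUnion_preimage_add_zsmul_le [μ.IsAddRightInvariant]
    (hs : MeasurableSet s) (hp : 0 < p) (a : ℝ) :
    μ (Ico 0 p ∩ ⋃ n : ℤ, (· + (a + n • p)) ⁻¹' s) ≤ μ s := by
  calc μ (Ico 0 p ∩ ⋃ n : ℤ, (· + (a + n • p)) ⁻¹' s)
      ≤ ∑' n : ℤ, μ (Ico 0 p ∩ (· + (a + n • p)) ⁻¹' s) := by
        rw [inter_iUnion]; exact measure_iUnion_le _
    _ = ∑' n : ℤ, μ (s ∩ Ico (a + n • p) (a + (n + 1) • p)) := by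
        simp only [measure_Ico_inter_preimage_add, add_one_zsmul, add_assoc]
    _ = μ s := tsum_measure_inter_Ico_add_zsmul hs hp a

theorem measure_floor_ne_le [μ.IsAddRightInvariant] {δ a b : ℝ} (hδ : 0 < δ) (hab : a ≤ b)
    (c : ℝ) :
    μ {t | t ∈ Ico 0 δ ∧ ⌊(a - t) / δ + c⌋ ≠ ⌊(b - t) / δ + c⌋} ≤ μ (Ioc a b) := by
  refine (measure_mono ?_).trans
    (measure_Ico_inter_iUnion_preimage_add_zsmul_le measurableSet_Ioc hδ (-c * δ))
  rintro t ⟨ht, hne⟩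
  have hmono : (a - t) / δ + c ≤ (b - t) / δ + c := by gcongr
  obtain ⟨n, hlt, hle⟩ := exists_int_mem_Ioc_of_floor_ne hmono hne
  have hlt' : a - t < (n - c) * δ := (div_lt_iff₀ hδ).1 (by linarith)
  have hle' : (n - c) * δ ≤ b - t := (le_div_iff₀ hδ).1 (by linarith)
  refine ⟨ht, mem_iUnion.2 ⟨n, ?_⟩⟩
  simp only [mem_preimage, mem_Ioc, zsmul_eq_mul]
  constructor <;> linarith

end Translates

theorem volume_floor_ne_le {δ : ℝ} (hδ : 0 < δ) (a b c : ℝ) :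
    volume {t | t ∈ Ico 0 δ ∧ ⌊(a - t) / δ + c⌋ ≠ ⌊(b - t) / δ + c⌋}
      ≤ ENNReal.ofReal (min |a - b| δ) := by
  rw [ENNReal.ofReal_min]
  refine le_min ?_ ?_
  · rcases le_total a b with hab | hba
    · simpa [abs_of_nonpos (sub_nonpos.2 hab)] using
        measure_floor_ne_le (μ := volume) hδ hab c
    · simpa [abs_of_nonneg (sub_nonneg.2 hba), eq_comm] using
        measure_floor_ne_le (μ := volume) hδ hba c
  · simpa using measure_mono (μ := volume) (fun t ht => ht.1 : _ ⊆ Ico 0 δ)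

theorem measure_pi_inter_exists_mem_le {ι : Type*} [Fintype ι] [DecidableEq ι] {α : ι → Type*}
    [∀ i, MeasurableSpace (α i)] (μ : ∀ i, Measure (α i)) [∀ i, SigmaFinite (μ i)]
    (S B : ∀ i, Set (α i)) :
    Measure.pi μ {z | (∀ i, z i ∈ S i) ∧ ∃ i, z i ∈ B i}
      ≤ ∑ i, μ i (S i ∩ B i) * ∏ j ∈ Finset.univ.erase i, μ j (S j) := by
  have hcover : {z | (∀ i, z i ∈ S i) ∧ ∃ i, z i ∈ B i}
      ⊆ ⋃ i, univ.pi (Function.update S i (S i ∩ B i)) := by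
    rintro z ⟨hS, i, hB⟩
    refine mem_iUnion.2 ⟨i, fun j _ => ?_⟩
    rcases eq_or_ne j i with rfl | hji
    · simpa using ⟨hS j, hB⟩
    · simpa [hji] using hS j
  refine (measure_mono hcover).trans ((measure_iUnion_fintype_le _ _).trans_eq
    (Finset.sum_congr rfl fun i _ => ?_))
  rw [Measure.pi_pi, ← Finset.mul_prod_erase _ _ (Finset.mem_univ i), Function.update_self]
  congr 1
  exact Finset.prod_congr rfl fun j hj => by
    rw [Function.update_of_ne (Finset.ne_of_mem_erase hj)]

theorem volume_separating_offsets_le {ι : Type*} [Fintype ι] {δ : ℝ} (hδ : 0 < δ) (c : ℝ)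
    (x y : ι → ℝ) :
    volume {z : ι → ℝ | (∀ i, z i ∈ Ico 0 δ) ∧
        ¬ ∀ i, ⌊(x i - z i) / δ + c⌋ = ⌊(y i - z i) / δ + c⌋}
      ≤ ∑ i, ENNReal.ofReal (min |x i - y i| δ) * ENNReal.ofReal δ ^ (Fintype.card ι - 1) := by
  classical
  simp only [not_forall]
  refine (measure_pi_inter_exists_mem_le (fun _ => volume) (fun _ => Ico 0 δ)
    (fun i => {t | ⌊(x i - t) / δ + c⌋ ≠ ⌊(y i - t) / δ + c⌋})).trans ?_
  gcongr with i
  · exact volume_floor_ne_le hδ (x i) (y i) c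
  · simp [Finset.card_erase_of_mem]

theorem measure_of_separating_offsets_general (x y : EuclideanSpace ℝ (Fin 3))
    (δ : ℝ) (hδ : 0 < δ) :
    volume {z : EuclideanSpace ℝ (Fin 3) | (∀ i, z i ∈ Ico (0:ℝ) δ) ∧
        ¬ (∀ i : Fin 3, ⌊(x i - z i) / δ + 1/2⌋ = ⌊(y i - z i) / δ + 1/2⌋)}
      ≤ ENNReal.ofReal (3 * min (dist x y) δ * δ ^ 2) := by
  have hflat := volume_separating_offsets_le hδ (1 / 2) x.ofLp y.ofLp
  rw [← (EuclideanSpace.volume_preserving_symm_measurableEquiv_toLp _).measure_preimage_equiv]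
    at hflat
  calc _ ≤ ∑ i : Fin 3, ENNReal.ofReal (min |x i - y i| δ) * ENNReal.ofReal δ ^ 2 := hflat
    _ ≤ ∑ _ : Fin 3, ENNReal.ofReal (min (dist x y) δ) * ENNReal.ofReal δ ^ 2 := by
        gcongr with i
        rw [← Real.dist_eq]
        exact PiLp.dist_apply_le x y i
    _ = ENNReal.ofReal (3 * min (dist x y) δ * δ ^ 2) := by
        rw [ENNReal.ofReal_mul (by positivity), ENNReal.ofReal_mul (by norm_num),
          ENNReal.ofReal_pow hδ.le]
        simp [mul_assoc]

/-- Averaging estimate: for `x ≠ y` in `ℝ³` and `δ > 0`, the set of grid offsets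
`z ∈ [0,δ)³` for which `x` and `y` lie in different cubes of the shifted grid of half-open
cubes of side `δ` has Lebesgue measure at most `3 · min(|x−y|, δ) · δ²`. -/
theorem measure_of_separating_offsets (x y : EuclideanSpace ℝ (Fin 3)) (hxy : x ≠ y)
    (δ : ℝ) (hδ : 0 < δ) :
    volume {z : EuclideanSpace ℝ (Fin 3) | (∀ i, z i ∈ Ico (0:ℝ) δ) ∧
        ¬ (∀ i : Fin 3, ⌊(x i - z i) / δ + 1/2⌋ = ⌊(y i - z i) / δ + 1/2⌋)}
      ≤ ENNReal.ofReal (3 * min (dist x y) δ * δ ^ 2) :=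
  measure_of_separating_offsets_general x y δ hδ
end
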